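/- arXiv:2302.02544 — 8 statements merged into one kernel-verified Lean document; each statement's English description precedes it below -/
import Mathlib

section
/- Let Θ be a real normed vector space, let θ₀ ≠ θ₁ ∈ Θ, let T ≥ 1 be a natural number, and for each natural number t > T set θ̃_t := (T/t)·θ₀ + (1 − T/t)·θ₁. Let (C_t)_{t ≥ 1} be subsets of Θ and w : ℕ → ℝ satisfy: every θ ∈ C_T has ‖θ − θ₀‖ ≤ w(T), and for each t > T every θ ∈ C_t has ‖θ − θ̃_t‖ ≤ w(t). Then ‖θ₀ − θ̃_t‖ = ((t−T)/t)·‖θ₀ − θ₁‖ for every t > T, and for any t* > T with w(t*) + w(T) < ((t*−T)/t*)·‖θ₀ − θ₁‖ the sets C_T and C_{t*} are disjoint; consequently the FCS-Detector stopping time τ := inf{n ≥ 1 : ∃ t < n, C_t ∩ C_n = ∅} satisfies τ ≤ t*, i.e., τ − T ≤ min{t − T : t > T, w(t) + w(T) < ((t−T)/t)·‖θ₀ − θ₁‖}. -/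
open scoped ENNReal

/-- **FCS-Detector detection delay** (Proposition 3.1(ii) + Remark 3.2, deterministic content).
If the confidence sets cover the running-average parameter with width `w`, then
`‖θ₀ - θ̃ t‖ = ((t-T)/t)·‖θ₀ - θ₁‖` for `t > T`, and whenever
`w t* + w T < ((t*-T)/t*)·‖θ₀ - θ₁‖` for some `t* > T`, the sets `C T` and `C t*`
are disjoint, so the FCS-Detector stops by time `t*`. -/
theorem fcs_detector_delay
    {Θ : Type*} [NormedAddCommGroup Θ] [NormedSpace ℝ Θ]
    (θ₀ θ₁ : Θ) (hθ : θ₀ ≠ θ₁) (T : ℕ) (hT : 1 ≤ T)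
    (θtilde : ℕ → Θ)
    (hθtilde : ∀ t, T < t →
      θtilde t = ((T : ℝ) / t) • θ₀ + (1 - (T : ℝ) / t) • θ₁)
    (C : ℕ → Set Θ) (w : ℕ → ℝ)
    (hC_T : ∀ θ ∈ C T, ‖θ - θ₀‖ ≤ w T)
    (hC_t : ∀ t, T < t → ∀ θ ∈ C t, ‖θ - θtilde t‖ ≤ w t)
    (τ : ℕ∞)
    (hτ : τ = sInf {e : ℕ∞ | ∃ n : ℕ, (n : ℕ∞) = e ∧ 1 ≤ n ∧
        ∃ t < n, C t ∩ C n = ∅}) :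
    (∀ t, T < t → ‖θ₀ - θtilde t‖ = (((t : ℝ) - T) / t) * ‖θ₀ - θ₁‖) ∧
    (∀ tstar : ℕ, T < tstar →
      w tstar + w T < (((tstar : ℝ) - T) / tstar) * ‖θ₀ - θ₁‖ →
      C T ∩ C tstar = ∅ ∧ τ ≤ (tstar : ℕ∞)) := by
  have key : ∀ t, T < t → ‖θ₀ - θtilde t‖ = (((t : ℝ) - T) / t) * ‖θ₀ - θ₁‖ := by
    intro t ht
    have htpos : (0 : ℝ) < t := by
      exact_mod_cast Nat.lt_of_lt_of_le (Nat.lt_of_lt_of_le Nat.zero_lt_one hT) ht.le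
    have hdiff : θ₀ - θtilde t = (1 - (T : ℝ) / t) • (θ₀ - θ₁) := by
      rw [hθtilde t ht]
      rw [smul_sub, sub_smul, one_smul]
      have : ((T : ℝ) / t) • θ₀ = θ₀ - (1 - (T : ℝ) / t) • θ₀ := by
        rw [sub_smul, one_smul]; abel
      rw [this]; abel
    rw [hdiff, norm_smul, Real.norm_eq_abs]
    have h1 : (1 : ℝ) - (T : ℝ) / t = ((t : ℝ) - T) / t := by
      field_simp
    rw [h1, abs_of_nonneg]
    apply div_nonneg _ htpos.le
    have : (T : ℝ) ≤ t := by exact_mod_cast ht.le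
    linarith
  refine ⟨key, fun tstar hts hw => ?_⟩
  have hdisj : C T ∩ C tstar = ∅ := by
    by_contra h
    obtain ⟨θ, hθT, hθt⟩ := Set.nonempty_iff_ne_empty.mpr h
    have h1 := hC_T θ hθT
    have h2 := hC_t tstar hts θ hθt
    have : ‖θ₀ - θtilde tstar‖ ≤ w T + w tstar := by
      calc ‖θ₀ - θtilde tstar‖ ≤ ‖θ₀ - θ‖ + ‖θ - θtilde tstar‖ := norm_sub_le_norm_sub_add_norm_sub _ _ _
        _ ≤ w T + w tstar := by
            rw [norm_sub_rev θ₀ θ] at *; exact add_le_add h1 h2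
    rw [key tstar hts] at this
    linarith
  refine ⟨hdisj, ?_⟩
  rw [hτ]
  exact sInf_le ⟨tstar, rfl, le_trans hT hts.le, T, hts, hdisj⟩
end

section
/- Let (Ω, ℱ, P) be a probability space, α ∈ (0,1], and let τ : Ω → ℕ ∪ {∞} be measurable with P(τ ≤ N) ≤ (N+1)·α for every natural number N ≥ 1. Then the expectation satisfies E[τ] ≥ 1/(2α) − 3/2 + α. -/
open MeasureTheory
open scoped ENNReal


lemma aux_sum_ite_le (k : ℕ∞) (M : ℕ) :
    ∑ N ∈ Finset.range M, (if (N : ℕ∞) < k then (1 : ℝ≥0∞) else 0) ≤ (k : ℝ≥0∞) := by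
  induction M with
  | zero => simp
  | succ M ih =>
    rw [Finset.sum_range_succ]
    by_cases h : (M : ℕ∞) < k
    · have h1 : ((M : ℕ∞) + 1) ≤ k := Order.add_one_le_of_lt h
      have h2 : ((M : ℝ≥0∞) + 1) ≤ (k : ℝ≥0∞) := by
        calc ((M : ℝ≥0∞) + 1) = (((M : ℕ∞) + 1 : ℕ∞) : ℝ≥0∞) := by push_cast; ring
        _ ≤ (k : ℝ≥0∞) := ENat.toENNReal_le.mpr h1
      refine le_trans ?_ h2
      gcongr
      · calc ∑ N ∈ Finset.range M, (if (N : ℕ∞) < k then (1 : ℝ≥0∞) else 0)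
            ≤ ∑ _N ∈ Finset.range M, (1 : ℝ≥0∞) := by
              gcongr with N hN; split <;> simp
        _ = M := by simp
      · simp [h]
    · simp only [h, if_false, add_zero]; exact ih

lemma aux_coeff_sum (M : ℕ) (hM : 1 ≤ M) :
    ∑ N ∈ Finset.range M, ((max N 1 : ℕ) + 1 : ℝ) = M * (M + 1) / 2 + 1 := by
  induction M with
  | zero => omega
  | succ M ih =>
    rcases Nat.eq_or_lt_of_le hM with h | h
    · have h0 : M = 0 := by omega
      subst h0; simp
    · have hM1 : 1 ≤ M := by omega
      rw [Finset.sum_range_succ, ih hM1, Nat.max_eq_left hM1]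
      push_cast; ring

lemma aux_ofReal_sum_le {ι : Type*} (s : Finset ι) (f : ι → ℝ) :
    ENNReal.ofReal (∑ i ∈ s, f i) ≤ ∑ i ∈ s, ENNReal.ofReal (f i) := by
  induction s using Finset.cons_induction with
  | empty => simp
  | cons a s ha ih =>
    rw [Finset.sum_cons, Finset.sum_cons]
    exact le_trans ENNReal.ofReal_add_le (by gcongr)

/-- **Tail-sum step in the ARL bound of the BCS-Detector** (proof of Theorem 4.2(i)).
If `P(τ ≤ N) ≤ (N+1)·α` for every `N ≥ 1`, then
`E[τ] ≥ 1/(2α) - 3/2 + α`. -/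
theorem bcs_detector_arl_tail_sum
    {Ω : Type*} [MeasurableSpace Ω] (P : Measure Ω) [IsProbabilityMeasure P]
    (α : ℝ) (hα : α ∈ Set.Ioc (0 : ℝ) 1)
    (τ : Ω → ℕ∞) (hτ_meas : Measurable τ)
    (hbound : ∀ N : ℕ, 1 ≤ N →
      P {ω | τ ω ≤ (N : ℕ∞)} ≤ ENNReal.ofReal (((N : ℝ) + 1) * α)) :
    ENNReal.ofReal (1 / (2 * α) - 3 / 2 + α) ≤ ∫⁻ ω, (τ ω : ℝ≥0∞) ∂P := by
  obtain ⟨hα0, hα1⟩ := hα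
  by_cases hhalf : 1/2 ≤ α
  · have h2α : 0 < 2 * α := by linarith
    have hle : 1 / (2 * α) - 3 / 2 + α ≤ 0 := by
      have : 1 / (2 * α) ≤ 3 / 2 - α := by
        rw [div_le_iff₀ h2α]; nlinarith
      linarith
    rw [ENNReal.ofReal_eq_zero.mpr hle]
    exact zero_le
  · push_neg at hhalf
    set M := ⌊1/α⌋₊ with hMdef
    have hα0' : (0:ℝ) ≤ 1/α := by positivity
    have hMle : (M : ℝ) ≤ 1/α := Nat.floor_le hα0'
    have hMgt : 1/α < M + 1 := Nat.lt_floor_add_one _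
    have hM1 : 1 ≤ M := by
      have h2 : (2:ℝ) ≤ 1/α := by rw [le_div_iff₀ hα0]; linarith
      have := Nat.le_floor (α := ℝ) (n := 2) (by exact_mod_cast h2)
      omega
    have hsm : ∀ N : ℕ, MeasurableSet {ω | τ ω ≤ (N : ℕ∞)} := fun N =>
      hτ_meas (MeasurableSet.of_discrete (s := Set.Iic (N : ℕ∞)))
    have hsc : ∀ N : ℕ, MeasurableSet {ω | (N : ℕ∞) < τ ω} := fun N =>
      hτ_meas (MeasurableSet.of_discrete (s := Set.Ioi (N : ℕ∞)))
    have hb : ∀ N : ℕ, P {ω | τ ω ≤ (N : ℕ∞)} ≤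
        ENNReal.ofReal ((((max N 1 : ℕ) : ℝ) + 1) * α) := by
      intro N
      rcases Nat.eq_zero_or_pos N with h0 | h1
      · subst h0
        have h01 : {ω | τ ω ≤ ((0:ℕ) : ℕ∞)} ⊆ {ω | τ ω ≤ ((1:ℕ) : ℕ∞)} :=
          by intro ω hω
             simp only [Set.mem_setOf_eq] at hω ⊢
             exact hω.trans (by exact_mod_cast Nat.zero_le 1)
        refine le_trans (measure_mono h01) (le_trans (hbound 1 le_rfl) ?_)
        norm_num
      · rw [Nat.max_eq_left h1]
        exact hbound N h1
    have key1 : ∀ N : ℕ, (1 : ℝ≥0∞) - ENNReal.ofReal ((((max N 1 : ℕ) : ℝ) + 1) * α) ≤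
        P {ω | (N : ℕ∞) < τ ω} := by
      intro N
      have hcompl : {ω | (N : ℕ∞) < τ ω} = {ω | τ ω ≤ (N : ℕ∞)}ᶜ := by
        ext ω; simp [not_le]
      rw [hcompl, prob_compl_eq_one_sub (hsm N)]
      exact tsub_le_tsub_left (hb N) 1
    calc ENNReal.ofReal (1 / (2 * α) - 3 / 2 + α)
        ≤ ENNReal.ofReal (∑ N ∈ Finset.range M, (1 - (((max N 1 : ℕ) : ℝ) + 1) * α)) := by
          apply ENNReal.ofReal_le_ofReal
          have hsum : ∑ N ∈ Finset.range M, (1 - (((max N 1 : ℕ) : ℝ) + 1) * α)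
              = M - ((M : ℝ) * (M + 1) / 2 + 1) * α := by
            rw [Finset.sum_sub_distrib, Finset.sum_const, ← Finset.sum_mul,
              aux_coeff_sum M hM1, Finset.card_range, nsmul_eq_mul, mul_one]
          rw [hsum]
          have hx1 : (M : ℝ) * α ≤ 1 := by
            rw [← le_div_iff₀ hα0]; exact hMle
          have hx2 : 1 < ((M : ℝ) + 1) * α := by
            rw [← div_lt_iff₀ hα0]; exact hMgt
          have hxx : 1 / (2 * α) * (2 * α) = 1 := by field_simp
          nlinarith [mul_nonneg (by nlinarith : (0:ℝ) ≤ α - (1 - (M:ℝ)*α))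
            (by nlinarith : (0:ℝ) ≤ 1 - (M:ℝ)*α), mul_pos hα0 hα0]
      _ ≤ ∑ N ∈ Finset.range M, ENNReal.ofReal (1 - (((max N 1 : ℕ) : ℝ) + 1) * α) :=
          aux_ofReal_sum_le _ _
      _ = ∑ N ∈ Finset.range M,
            ((1 : ℝ≥0∞) - ENNReal.ofReal ((((max N 1 : ℕ) : ℝ) + 1) * α)) := by
          refine Finset.sum_congr rfl fun N _ => ?_
          rw [ENNReal.ofReal_sub _ (by positivity), ENNReal.ofReal_one]
      _ ≤ ∑ N ∈ Finset.range M, P {ω | (N : ℕ∞) < τ ω} :=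
          Finset.sum_le_sum fun N _ => key1 N
      _ = ∑ N ∈ Finset.range M, ∫⁻ ω, Set.indicator {ω' | (N : ℕ∞) < τ ω'} 1 ω ∂P := by
          refine Finset.sum_congr rfl fun N _ => ?_
          rw [lintegral_indicator_one (hsc N)]
      _ = ∫⁻ ω, ∑ N ∈ Finset.range M, Set.indicator {ω' | (N : ℕ∞) < τ ω'} 1 ω ∂P :=
          (lintegral_finset_sum _ fun N _ => measurable_one.indicator (hsc N)).symm
      _ ≤ ∫⁻ ω, (τ ω : ℝ≥0∞) ∂P := by
          apply lintegral_mono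
          intro ω
          simpa [Set.indicator_apply] using aux_sum_ite_le (τ ω) M
end

section
/- Let (Ω, ℱ, P) be a probability space, α ∈ (0,1], let A be a measurable event with P(A) ≤ α, let (A_n)_{n ≥ 1} be measurable events with P(A_n) ≤ α for every n ≥ 1, and let τ : Ω → ℕ ∪ {∞} be measurable such that for every N ≥ 1 the inclusion {τ ≤ N} ⊆ A ∪ ⋃_{n=1}^{N} A_n holds. Then E[τ] ≥ 1/(2α) − 3/2. -/
open MeasureTheory
open scoped ENNReal

lemma sum_ind_le_aux (t : ℕ∞) (M : ℕ) :
    ∑ N ∈ Finset.range M, (if (N:ℕ∞) < t then (1:ℝ≥0∞) else 0) ≤ (t : ℝ≥0∞) := by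
  cases t with
  | top => exact le_top
  | coe k =>
    simp only [Nat.cast_lt]
    rw [Finset.sum_boole]
    have hsub : (Finset.range M).filter (fun N : ℕ => N < k) ⊆ Finset.range k := by
      intro N hN
      simp only [Finset.mem_filter] at hN
      exact Finset.mem_range.2 hN.2
    calc (((Finset.range M).filter (fun N : ℕ => N < k)).card : ℝ≥0∞)
        ≤ ((Finset.range k).card : ℝ≥0∞) := by
          exact_mod_cast Finset.card_le_card hsub
      _ = ((k:ℕ∞) : ℝ≥0∞) := by simp

/-- **ARL lower bound for the BCS-Detector** (Theorem 4.2(i)).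
Under the null (no changepoint), stopping by time `N` forces either the forward
confidence sequence (event `A`) or one of the backward confidence sequences
(events `As n`, `1 ≤ n ≤ N`) to miscover, and each miscoverage event has
probability at most `α`; hence the average run length satisfies
`E[τ] ≥ 1/(2α) - 3/2`. -/
theorem bcs_detector_arl
    {Ω : Type*} [MeasurableSpace Ω] (P : Measure Ω) [IsProbabilityMeasure P]
    (α : ℝ) (hα : α ∈ Set.Ioc (0 : ℝ) 1)
    (A : Set Ω) (hA_meas : MeasurableSet A) (hA : P A ≤ ENNReal.ofReal α)
    (As : ℕ → Set Ω) (hAs_meas : ∀ n, 1 ≤ n → MeasurableSet (As n))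
    (hAs : ∀ n, 1 ≤ n → P (As n) ≤ ENNReal.ofReal α)
    (τ : Ω → ℕ∞) (hτ_meas : Measurable τ)
    (hincl : ∀ N : ℕ, 1 ≤ N →
      {ω | τ ω ≤ (N : ℕ∞)} ⊆ A ∪ ⋃ n ∈ Finset.Icc 1 N, As n) :
    ENNReal.ofReal (1 / (2 * α) - 3 / 2) ≤ ∫⁻ ω, (τ ω : ℝ≥0∞) ∂P := by
  obtain ⟨hα0, hα1⟩ := hα
  by_cases htriv : 1 / (2*α) - 3/2 ≤ 0
  · rw [ENNReal.ofReal_eq_zero.2 htriv]; exact zero_le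
  push_neg at htriv
  set m := Nat.floor (1/α) with hmdef
  have hm1 : α * m ≤ 1 := by
    have h := Nat.floor_le (by positivity : (0:ℝ) ≤ 1/α)
    have := mul_le_mul_of_nonneg_left h hα0.le
    rwa [mul_one_div, div_self (ne_of_gt hα0)] at this
  have hm2 : 1 < α * (m+1) := by
    have h := Nat.lt_floor_add_one (1/α)
    have := mul_lt_mul_of_pos_left h hα0
    rwa [mul_one_div, div_self (ne_of_gt hα0)] at this
  have hm3 : 3 ≤ m := by
    have h' : 3/2 * (2*α) < 1 := by
      rw [← lt_div_iff₀ (by positivity : (0:ℝ) < 2*α)]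
      linarith [htriv]
    have h3 : (3:ℝ) ≤ 1/α := by
      rw [le_div_iff₀ hα0]
      linarith
    exact_mod_cast Nat.le_floor (by exact_mod_cast h3)
  -- measurability of level sets
  have hmeas_le : ∀ N : ℕ, MeasurableSet {ω | τ ω ≤ (N:ℕ∞)} := fun N =>
    hτ_meas (Set.to_countable {x : ℕ∞ | x ≤ (N:ℕ∞)}).measurableSet
  have hmeas_gt : ∀ N : ℕ, MeasurableSet {ω | (N:ℕ∞) < τ ω} := fun N =>
    hτ_meas (Set.to_countable {x : ℕ∞ | (N:ℕ∞) < x}).measurableSet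
  -- probability bound from the inclusion
  have hP : ∀ N : ℕ, 1 ≤ N → P {ω | τ ω ≤ (N:ℕ∞)} ≤ ((N:ℝ≥0∞)+1) * ENNReal.ofReal α := by
    intro N hN
    calc P {ω | τ ω ≤ (N:ℕ∞)} ≤ P (A ∪ ⋃ n ∈ Finset.Icc 1 N, As n) :=
          measure_mono (hincl N hN)
      _ ≤ P A + P (⋃ n ∈ Finset.Icc 1 N, As n) := measure_union_le _ _
      _ ≤ ENNReal.ofReal α + ∑ n ∈ Finset.Icc 1 N, P (As n) :=
          add_le_add hA (measure_biUnion_finset_le _ _)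
      _ ≤ ENNReal.ofReal α + ∑ n ∈ Finset.Icc 1 N, ENNReal.ofReal α :=
          add_le_add_right (Finset.sum_le_sum fun n hn => hAs n (Finset.mem_Icc.1 hn).1) _
      _ = ((N:ℝ≥0∞)+1) * ENNReal.ofReal α := by
          rw [Finset.sum_const, Nat.card_Icc, nsmul_eq_mul]
          simp only [Nat.add_sub_cancel]
          ring
  have hPgt : ∀ N : ℕ, 1 ≤ N →
      ENNReal.ofReal (1 - ((N:ℝ)+1)*α) ≤ P {ω | (N:ℕ∞) < τ ω} := by
    intro N hN
    have hc : {ω | (N:ℕ∞) < τ ω} = {ω | τ ω ≤ (N:ℕ∞)}ᶜ := by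
      ext ω; simp [not_le]
    rw [hc, prob_compl_eq_one_sub (hmeas_le N)]
    have h1 : P {ω | τ ω ≤ (N:ℕ∞)} ≤ ENNReal.ofReal (((N:ℝ)+1)*α) := by
      refine (hP N hN).trans_eq ?_
      rw [ENNReal.ofReal_mul (by positivity : (0:ℝ) ≤ (N:ℝ)+1)]
      congr 1
      rw [ENNReal.ofReal_add (by positivity) zero_le_one]
      simp [ENNReal.ofReal_natCast]
    calc ENNReal.ofReal (1 - ((N:ℝ)+1)*α)
        = ENNReal.ofReal 1 - ENNReal.ofReal (((N:ℝ)+1)*α) :=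
          ENNReal.ofReal_sub _ (by positivity)
      _ = 1 - ENNReal.ofReal (((N:ℝ)+1)*α) := by rw [ENNReal.ofReal_one]
      _ ≤ 1 - P {ω | τ ω ≤ (N:ℕ∞)} := tsub_le_tsub_left h1 1
  -- closed form for the real sum
  have hsum2 : ∀ K : ℕ, (∑ N ∈ Finset.range K, (1 - ((N:ℝ)+2)*α)) * 2
      = 2*(K:ℝ) - α*K*((K:ℝ)+3) := by
    intro K
    induction K with
    | zero => simp
    | succ K ih =>
      rw [Finset.sum_range_succ, add_mul, ih]
      push_cast
      ring
  have hcast : ((m-1 : ℕ):ℝ) = (m:ℝ) - 1 := by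
    have h1 : 1 ≤ m := by omega
    push_cast [h1]
    ring
  have hkey : 1/(2*α) - 3/2 ≤ ∑ N ∈ Finset.range (m-1), (1 - ((N:ℝ)+2)*α) := by
    have h2 := hsum2 (m-1)
    rw [hcast] at h2
    rw [sub_le_iff_le_add, div_le_iff₀ (by positivity)]
    nlinarith [mul_nonneg (sub_nonneg.2 hm2.le) (sub_nonneg.2 hm1), sq_nonneg α, hα0.le]
  have hnonneg : ∀ N ∈ Finset.range (m-1), (0:ℝ) ≤ 1 - ((N:ℝ)+2)*α := by
    intro N hN
    have hN' : N + 2 ≤ m := by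
      have := Finset.mem_range.1 hN; omega
    have hNr : ((N:ℝ)+2) ≤ (m:ℝ) := by exact_mod_cast hN'
    nlinarith [mul_le_mul_of_nonneg_right hNr hα0.le]
  calc ENNReal.ofReal (1/(2*α) - 3/2)
      ≤ ENNReal.ofReal (∑ N ∈ Finset.range (m-1), (1 - ((N:ℝ)+2)*α)) :=
        ENNReal.ofReal_le_ofReal hkey
    _ = ∑ N ∈ Finset.range (m-1), ENNReal.ofReal (1 - ((N:ℝ)+2)*α) :=
        ENNReal.ofReal_sum_of_nonneg hnonneg
    _ ≤ ∑ N ∈ Finset.range (m-1), P {ω | (N:ℕ∞) < τ ω} := by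
        apply Finset.sum_le_sum
        intro N _
        have h1 := hPgt (N+1) (by omega)
        have h2 : P {ω | ((N+1:ℕ):ℕ∞) < τ ω} ≤ P {ω | (N:ℕ∞) < τ ω} := by
          apply measure_mono
          intro ω hω
          simp only [Set.mem_setOf_eq] at hω ⊢
          exact lt_of_le_of_lt (by exact_mod_cast Nat.le_succ N : (N:ℕ∞) ≤ ((N+1:ℕ):ℕ∞)) hω
        refine le_trans (le_of_eq ?_) (h1.trans h2)
        congr 1
        push_cast
        ring
    _ = ∑ N ∈ Finset.range (m-1),
          ∫⁻ ω, ({ω | (N:ℕ∞) < τ ω}).indicator (1 : Ω → ℝ≥0∞) ω ∂P := by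
        refine Finset.sum_congr rfl fun N _ => ?_
        rw [lintegral_indicator_one (hmeas_gt N)]
    _ = ∫⁻ ω, ∑ N ∈ Finset.range (m-1),
          ({ω | (N:ℕ∞) < τ ω}).indicator (1 : Ω → ℝ≥0∞) ω ∂P := by
        rw [lintegral_finset_sum]
        intro N _
        exact measurable_one.indicator (hmeas_gt N)
    _ ≤ ∫⁻ ω, (τ ω : ℝ≥0∞) ∂P := by
        apply lintegral_mono
        intro ω
        have h := sum_ind_le_aux (τ ω) (m-1)
        simpa [Set.indicator_apply] using h
end

section
/- Let (Ω, ℱ, P) be a probability space, α ∈ (0, 1/2), and let T ≥ 0 and u₀ ≥ 1 be integers. Let τ : Ω → ℕ ∪ {∞} be measurable, let E be a measurable event with P(E) > 0, and let (B_j)_{j ≥ 1} be measurable events with P(B_j) ≤ α for every j ≥ 1, such that the family of events {E, B₁, B₂, …} is mutually independent and for every integer i ≥ 1 the inclusion {τ > T + i·u₀} ∩ E ⊆ ⋂_{j=1}^{i} B_j holds. Then the conditional expected detection delay satisfies E[(τ − T)⁺ | E] ≤ 3·u₀/(1−α). -/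
open MeasureTheory ProbabilityTheory
open scoped ENNReal

lemma enat_cast_eq_tsum (m : ℕ∞) :
    ((m : ℝ≥0∞)) = ∑' n : ℕ, (if (n : ℕ∞) < m then (1 : ℝ≥0∞) else 0) := by
  cases m with
  | top =>
    simp only [lt_top_iff_ne_top, ENat.coe_ne_top, ne_eq, not_false_eq_true, if_true]
    simp [ENNReal.tsum_const_eq_top_of_ne_zero]
  | coe k =>
    rw [tsum_eq_sum (s := Finset.range k) (by
      intro n hn
      simp only [Finset.mem_range, not_lt] at hn
      rw [if_neg]
      exact not_lt.2 (by exact_mod_cast hn))]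
    rw [Finset.sum_congr rfl (fun n hn => by
      simp only [Finset.mem_range] at hn
      rw [if_pos]
      exact_mod_cast hn)]
    simp

lemma enat_lt_sub_iff (T n : ℕ) (m : ℕ∞) :
    (n : ℕ∞) < m - (T : ℕ∞) ↔ ((T + n : ℕ) : ℕ∞) < m := by
  cases m with
  | top => simp [ENat.top_sub_coe]
  | coe k =>
    rw [show ((k : ℕ∞) - (T : ℕ∞)) = ((k - T : ℕ) : ℕ∞) by exact_mod_cast rfl]
    rw [Nat.cast_lt, Nat.cast_lt]
    omega

lemma ennreal_sub_enat (T : ℕ) (m : ℕ∞) :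
    (m : ℝ≥0∞) - ((T : ℕ∞) : ℝ≥0∞) = ((m - (T : ℕ∞) : ℕ∞) : ℝ≥0∞) := by
  cases m with
  | top => simp [ENat.top_sub_coe]
  | coe k =>
    rw [show ((k : ℕ∞) - (T : ℕ∞)) = ((k - T : ℕ) : ℕ∞) by exact_mod_cast rfl]
    simp only [ENat.toENNReal_coe]
    exact (ENNReal.natCast_sub k T).symm

lemma enat_tail_tsum (T : ℕ) (m : ℕ∞) :
    (m : ℝ≥0∞) - ((T : ℕ∞) : ℝ≥0∞)
      = ∑' n : ℕ, (if ((T + n : ℕ) : ℕ∞) < m then (1 : ℝ≥0∞) else 0) := by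
  rw [ennreal_sub_enat, enat_cast_eq_tsum]
  exact tsum_congr fun n => if_congr (enat_lt_sub_iff T n m) rfl rfl


/-- **Conditional expected detection delay of the BCS-Detector** (Theorem 4.2(ii), abstract form).
If the events `{E, B 1, B 2, …}` are mutually independent, each `B j` (`j ≥ 1`) has
probability at most `α < 1/2`, `P(E) > 0`, and not having stopped `i·u₀` steps after
the changepoint `T` (on the event `E`) forces all of `B 1, …, B i` to occur, then the
conditional expected detection delay satisfies `E[(τ - T)⁺ | E] ≤ 3·u₀/(1-α)`. -/
theorem bcs_detector_delay_bound
    {Ω : Type*} [MeasurableSpace Ω] (P : Measure Ω) [IsProbabilityMeasure P]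
    (α : ℝ) (hα : α ∈ Set.Ioo (0 : ℝ) (1 / 2))
    (T u₀ : ℕ) (hu₀ : 1 ≤ u₀)
    (τ : Ω → ℕ∞) (hτ_meas : Measurable τ)
    (E : Set Ω) (hE_meas : MeasurableSet E) (hE_pos : 0 < P E)
    (B : ℕ → Set Ω) (hB_meas : ∀ j, 1 ≤ j → MeasurableSet (B j))
    (hB : ∀ j, 1 ≤ j → P (B j) ≤ ENNReal.ofReal α)
    (hindep : iIndepSet (fun o : Option ℕ => o.elim E (fun j => B (j + 1))) P)
    (hincl : ∀ i : ℕ, 1 ≤ i →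
      {ω | ((T + i * u₀ : ℕ) : ℕ∞) < τ ω} ∩ E ⊆ ⋂ j ∈ Finset.Icc 1 i, B j) :
    ∫⁻ ω, ((τ ω - (T : ℕ∞)) : ℝ≥0∞) ∂(ProbabilityTheory.cond P E) ≤
      ENNReal.ofReal (3 * (u₀ : ℝ) / (1 - α)) := by
  obtain ⟨hα0, hα2⟩ := hα
  haveI : NeZero u₀ := ⟨by omega⟩
  set a : ℝ≥0∞ := ENNReal.ofReal α with ha
  have hPE : P E ≠ 0 := hE_pos.ne'
  have hPEtop : P E ≠ ⊤ := measure_ne_top P E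
  haveI : IsProbabilityMeasure (P[|E]) := cond_isProbabilityMeasure hPE
  have hmeas : ∀ n : ℕ, MeasurableSet {ω | ((T + n : ℕ) : ℕ∞) < τ ω} := fun n =>
    hτ_meas (t := {x : ℕ∞ | ((T + n : ℕ) : ℕ∞) < x}) MeasurableSet.of_discrete
  -- Step A: key probability bound
  have keyA : ∀ i : ℕ, 1 ≤ i →
      (P[|E]) {ω | ((T + i * u₀ : ℕ) : ℕ∞) < τ ω} ≤ a ^ i := by
    intro i hi
    rw [cond_apply hE_meas]
    set s : Finset (Option ℕ) := insert none ((Finset.range i).image some) with hs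
    have hsub : E ∩ {ω | ((T + i * u₀ : ℕ) : ℕ∞) < τ ω} ⊆
        ⋂ o ∈ s, Option.elim o E (fun j => B (j + 1)) := by
      intro ω hω
      have h2 := hincl i hi ⟨hω.2, hω.1⟩
      refine Set.mem_iInter₂.2 fun o ho => ?_
      simp only [hs, Finset.mem_insert, Finset.mem_image, Finset.mem_range] at ho
      rcases ho with rfl | ⟨j, hj, rfl⟩
      · exact hω.1
      · exact Set.mem_iInter₂.1 h2 (j + 1) (Finset.mem_Icc.2 ⟨by omega, by omega⟩)
    calc (P E)⁻¹ * P (E ∩ {ω | ((T + i * u₀ : ℕ) : ℕ∞) < τ ω})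
        ≤ (P E)⁻¹ * P (⋂ o ∈ s, Option.elim o E (fun j => B (j + 1))) :=
          mul_le_mul_right (measure_mono hsub) _
      _ = (P E)⁻¹ * (P E * ∏ j ∈ Finset.range i, P (B (j + 1))) := by
          rw [hindep.meas_biInter s, hs, Finset.prod_insert (by simp),
            Finset.prod_image (fun x _ y _ h => Option.some.inj h)]
          rfl
      _ = ∏ j ∈ Finset.range i, P (B (j + 1)) := by
          rw [← mul_assoc, ENNReal.inv_mul_cancel hPE hPEtop, one_mul]
      _ ≤ a ^ i := by
          calc ∏ j ∈ Finset.range i, P (B (j + 1))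
              ≤ a ^ (Finset.range i).card :=
                Finset.prod_le_pow_card _ _ _ (fun j _ => hB (j + 1) (by omega))
            _ = a ^ i := by simp
  -- Step B: per-n bound
  have keyB : ∀ n : ℕ, (P[|E]) {ω | ((T + n : ℕ) : ℕ∞) < τ ω} ≤ a ^ (n / u₀) := by
    intro n
    rcases Nat.eq_zero_or_pos (n / u₀) with h0 | h1
    · rw [h0, pow_zero]; exact prob_le_one
    · refine le_trans (measure_mono ?_) (keyA _ h1)
      intro ω hω
      simp only [Set.mem_setOf_eq] at *
      refine lt_of_le_of_lt ?_ hω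
      have h : (n / u₀) * u₀ ≤ n := Nat.div_mul_le_self n u₀
      exact_mod_cast Nat.add_le_add_left h T
  -- Step C: geometric sum
  have hsum : ∑' n : ℕ, a ^ (n / u₀) = (u₀ : ℝ≥0∞) * (1 - a)⁻¹ := by
    rw [← (Nat.divModEquiv u₀).symm.tsum_eq (fun n => a ^ (n / u₀))]
    have hcong : ∀ p : ℕ × Fin u₀,
        a ^ (((Nat.divModEquiv u₀).symm p) / u₀) = a ^ p.1 := by
      intro p
      congr 1
      show (p.1 * u₀ + (p.2 : ℕ)) / u₀ = p.1
      rw [mul_comm, Nat.mul_add_div (by omega), Nat.div_eq_of_lt p.2.is_lt, add_zero]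
    rw [tsum_congr hcong, ENNReal.tsum_prod (f := fun (i : ℕ) (_ : Fin u₀) => a ^ i)]
    have : ∀ i : ℕ, ∑' _ : Fin u₀, a ^ i = (u₀ : ℝ≥0∞) * a ^ i := by
      intro i
      rw [tsum_fintype, Finset.sum_const, Finset.card_univ, Fintype.card_fin, nsmul_eq_mul]
    rw [tsum_congr this, ENNReal.tsum_mul_left, ENNReal.tsum_geometric]
  -- linearization of the integral
  have hlin : ∫⁻ ω, ((τ ω - (T : ℕ∞)) : ℝ≥0∞) ∂(P[|E])
      = ∑' n : ℕ, (P[|E]) {ω | ((T + n : ℕ) : ℕ∞) < τ ω} := by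
    have heq : ∀ ω, ((τ ω : ℝ≥0∞) - ((T : ℕ∞) : ℝ≥0∞))
        = ∑' n : ℕ, Set.indicator {ω' | ((T + n : ℕ) : ℕ∞) < τ ω'} 1 ω := by
      intro ω
      rw [enat_tail_tsum]
      refine tsum_congr fun n => ?_
      rw [Set.indicator_apply]
      simp [Set.mem_setOf_eq]
    simp_rw [heq]
    rw [lintegral_tsum (fun n => (measurable_one.indicator (hmeas n)).aemeasurable)]
    refine tsum_congr fun n => ?_
    exact lintegral_indicator_one (hmeas n)
  calc ∫⁻ ω, ((τ ω - (T : ℕ∞)) : ℝ≥0∞) ∂(P[|E])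
      = ∑' n : ℕ, (P[|E]) {ω | ((T + n : ℕ) : ℕ∞) < τ ω} := hlin
    _ ≤ ∑' n : ℕ, a ^ (n / u₀) := ENNReal.tsum_le_tsum keyB
    _ = (u₀ : ℝ≥0∞) * (1 - a)⁻¹ := hsum
    _ ≤ ENNReal.ofReal (3 * (u₀ : ℝ) / (1 - α)) := by
        have h1 : (1 : ℝ≥0∞) - a = ENNReal.ofReal (1 - α) := by
          rw [ENNReal.ofReal_sub 1 hα0.le, ENNReal.ofReal_one]
        have h2 : (0 : ℝ) < 1 - α := by linarith
        rw [h1, ← ENNReal.ofReal_inv_of_pos h2,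
          show ((u₀ : ℝ≥0∞)) = ENNReal.ofReal (u₀ : ℝ) by simp,
          ← ENNReal.ofReal_mul (by positivity)]
        refine ENNReal.ofReal_le_ofReal ?_
        rw [div_eq_mul_inv]
        have hinv : (0 : ℝ) ≤ (1 - α)⁻¹ := by positivity
        nlinarith [Nat.cast_nonneg (α := ℝ) u₀]
end

section
/- Let (X, 𝒳) be a measurable space, μ a probability measure on X, n ≥ 1 a natural number, Θ a set, θ ∈ Θ, and α ∈ (0,1). For each s ∈ {1, …, n}, let C_s : X^s → Set Θ be such that, under the product measure μ^n (i.e., when X₁, …, X_n are i.i.d. with law μ), the event {∀ s ∈ {1,…,n} : θ ∈ C_s(X₁, …, X_s)} is measurable and has probability at least 1 − α. Define the backward sets B_t^{(n)}(x₁, …, x_n) := C_{n+1−t}(x_n, x_{n−1}, …, x_t) for t ∈ {1, …, n}. Then the event {∀ t ∈ {1,…,n} : θ ∈ B_t^{(n)}(X₁, …, X_n)} has μ^n-probability at least 1 − α. -/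
open MeasureTheory
open scoped ENNReal

/-- **Backward confidence sequences from forward ones** (time-reversal construction).
If, under i.i.d. observations `X₁, …, X_n ~ μ`, the forward confidence sequence
`C s (X₁, …, X_s)` covers `θ` uniformly over `s ∈ {1, …, n}` with probability at
least `1 - α`, then the backward sets
`B_t^{(n)}(x₁, …, x_n) := C_{n+1-t}(x_n, x_{n-1}, …, x_t)` also cover `θ` uniformly
over `t ∈ {1, …, n}` with probability at least `1 - α`. -/
theorem backward_cs_coverage
    {X : Type*} [MeasurableSpace X] (μ : Measure X) [IsProbabilityMeasure μ]
    (n : ℕ) (hn : 1 ≤ n)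
    {Θ : Type*} (θ : Θ) (α : ℝ) (hα : α ∈ Set.Ioo (0 : ℝ) 1)
    (C : (s : ℕ) → (Fin s → X) → Set Θ)
    (hfwd_meas : MeasurableSet {x : Fin n → X |
      ∀ s : ℕ, 1 ≤ s → ∀ hsn : s ≤ n, θ ∈ C s (fun i => x (Fin.castLE hsn i))})
    (hfwd : ENNReal.ofReal (1 - α) ≤
      Measure.pi (fun _ : Fin n => μ) {x : Fin n → X |
        ∀ s : ℕ, 1 ≤ s → ∀ hsn : s ≤ n, θ ∈ C s (fun i => x (Fin.castLE hsn i))}) :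
    ENNReal.ofReal (1 - α) ≤
      Measure.pi (fun _ : Fin n => μ) {x : Fin n → X |
        ∀ t : ℕ, 1 ≤ t → t ≤ n →
          θ ∈ C (n + 1 - t)
            (fun j : Fin (n + 1 - t) => x ⟨n - 1 - (j : ℕ), by omega⟩)} := by
  set F : Set (Fin n → X) := {x : Fin n → X |
      ∀ s : ℕ, 1 ≤ s → ∀ hsn : s ≤ n, θ ∈ C s (fun i => x (Fin.castLE hsn i))} with hF
  set rev : (Fin n → X) → (Fin n → X) := fun x i => x i.rev with hrev
  have hmp : MeasurePreserving rev (Measure.pi fun _ : Fin n => μ)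
      (Measure.pi fun _ : Fin n => μ) := by
    have h := measurePreserving_piCongrLeft (fun _ : Fin n => μ) (Fin.revPerm (n := n))
    convert h using 1
    funext x i
    have hk := MeasurableEquiv.piCongrLeft_apply_apply (Fin.revPerm (n := n))
      (β := fun _ : Fin n => X) x i.rev
    simpa using hk.symm
  have hset : {x : Fin n → X |
        ∀ t : ℕ, 1 ≤ t → t ≤ n →
          θ ∈ C (n + 1 - t)
            (fun j : Fin (n + 1 - t) => x ⟨n - 1 - (j : ℕ), by omega⟩)}
      = rev ⁻¹' F := by
    ext x
    simp only [Set.mem_preimage, hF, Set.mem_setOf_eq]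
    constructor
    · intro hx s hs1 hsn
      have ht := hx (n + 1 - s) (by omega) (by omega)
      have e : n + 1 - (n + 1 - s) = s := by omega
      have hfun : ∀ (a : ℕ) (ea : a = s)
          (pf : ∀ j : Fin a, n - 1 - (j : ℕ) < n),
          θ ∈ C a (fun j : Fin a => x ⟨n - 1 - (j : ℕ), pf j⟩) →
          θ ∈ C s (fun i : Fin s => rev x (Fin.castLE hsn i)) := by
        intro a ea pf h
        subst ea
        convert h using 2
        funext i
        show x (Fin.castLE hsn i).rev = _
        congr 1
        apply Fin.ext
        simp [Fin.val_rev]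
        omega
      exact hfun _ e _ ht
    · intro hx t ht1 htn
      have hs := hx (n + 1 - t) (by omega) (by omega)
      convert hs using 2
      funext j
      show _ = x (Fin.castLE _ j).rev
      congr 1
      apply Fin.ext
      simp [Fin.val_rev]
      omega
  have h1 : (Measure.pi fun _ : Fin n => μ) (rev ⁻¹' F)
      = (Measure.pi fun _ : Fin n => μ) F := hmp.measure_preimage hfwd_meas.nullMeasurableSet
  exact le_trans hfwd (le_of_eq (h1.symm.trans (congrArg _ hset.symm)))
end

section
/- There exists an absolute constant K > 0 such that for all real numbers c ≥ 1, α ∈ (0, 1/2], and Δ ∈ (0, c], the quantity t₀ := min{t ∈ ℕ, t ≥ 3 : c·√((log log t + log(1/α))/t) ≤ Δ/2} is finite and satisfies t₀ ≤ K · c² · (log log(3 + c/Δ) + log(1/α)) / Δ². -/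
set_option maxHeartbeats 1000000


/-- **Proposition D.1** with an explicit universal constant: the first time `t₀ ≥ 3` at
which the confidence-sequence width `c·√((log log t + log(1/α))/t)` falls below `Δ/2`
is finite and of order `c²·(log log(3 + c/Δ) + log(1/α))/Δ²`. -/
theorem width_crossing_time_bound :
    ∃ K : ℝ, 0 < K ∧
      ∀ c α Δ : ℝ, 1 ≤ c → α ∈ Set.Ioc (0 : ℝ) (1 / 2) → Δ ∈ Set.Ioc (0 : ℝ) c →
        {t : ℕ | 3 ≤ t ∧
            c * Real.sqrt ((Real.log (Real.log t) + Real.log (1 / α)) / t) ≤ Δ / 2}.Nonempty ∧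
        ((sInf {t : ℕ | 3 ≤ t ∧
            c * Real.sqrt ((Real.log (Real.log t) + Real.log (1 / α)) / t) ≤ Δ / 2} : ℕ) : ℝ) ≤
          K * c ^ 2 * (Real.log (Real.log (3 + c / Δ)) + Real.log (1 / α)) / Δ ^ 2 := by
  refine ⟨42, by norm_num, ?_⟩
  intro c α Δ hc hα hΔ
  obtain ⟨hα0, hα2⟩ := hα
  obtain ⟨hΔ0, hΔc⟩ := hΔ
  have hc0 : (0 : ℝ) < c := lt_of_lt_of_le one_pos hc
  set r : ℝ := c / Δ with hr
  have hr1 : 1 ≤ r := (one_le_div hΔ0).mpr hΔc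
  have hr0 : (0 : ℝ) < r := lt_of_lt_of_le one_pos hr1
  set A : ℝ := Real.log (1 / α) with hA
  set S : ℝ := Real.log (3 + r) with hSdef
  set B : ℝ := Real.log S with hBdef
  -- basic bounds
  have hA2 : Real.log 2 ≤ A := by
    apply Real.log_le_log (by norm_num)
    rw [le_div_iff₀ hα0]
    linarith
  have hA69 : (0.69 : ℝ) ≤ A := le_trans (by linarith [Real.log_two_gt_d9]) hA2
  have hexp1 : Real.exp 1 ≤ 2.7182818286 := le_of_lt Real.exp_one_lt_d9
  have hS1 : (1 : ℝ) ≤ S := by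
    rw [hSdef, Real.le_log_iff_exp_le (by linarith)]
    linarith
  have hSpos : (0 : ℝ) < S := by linarith
  have hB0 : (0 : ℝ) ≤ B := Real.log_nonneg hS1
  set L : ℝ := B + A with hLdef
  have hLpos : (0 : ℝ) < L := by linarith
  -- candidate time
  set t : ℕ := ⌈(40 : ℝ) * r ^ 2 * L⌉₊ with htdef
  have hr2 : (1 : ℝ) ≤ r ^ 2 := by nlinarith
  have hTlb : (27 : ℝ) ≤ 40 * r ^ 2 * L := by nlinarith
  have htlb : (40 : ℝ) * r ^ 2 * L ≤ (t : ℝ) := Nat.le_ceil _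
  have htub : (t : ℝ) ≤ 42 * r ^ 2 * L := by
    have h1 : ((t : ℝ)) < 40 * r ^ 2 * L + 1 := Nat.ceil_lt_add_one (by nlinarith)
    nlinarith
  have ht3 : 3 ≤ t := by
    have : (3 : ℝ) ≤ (t : ℝ) := by linarith
    exact_mod_cast this
  have htpos : (0 : ℝ) < (t : ℝ) := by linarith
  -- log t bounds
  have hlogt_pos : (0 : ℝ) < Real.log t := Real.log_pos (by linarith)
  have hexp1' : (2.7 : ℝ) ≤ Real.exp 1 := by linarith [Real.exp_one_gt_d9]
  have hlog42 : Real.log 42 ≤ 4 := by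
    rw [Real.log_le_iff_le_exp (by norm_num)]
    have h4 : (2.7 : ℝ) ^ (4 : ℕ) ≤ Real.exp 1 ^ (4 : ℕ) :=
      pow_le_pow_left₀ (by norm_num) hexp1' 4
    rw [Real.exp_one_pow] at h4
    have : ((4 : ℕ) : ℝ) = (4 : ℝ) := by norm_num
    have h5 : (2.7 : ℝ) ^ (4 : ℕ) = 53.1441 := by norm_num
    linarith
  have hlog7 : Real.log 7 ≤ 2 := by
    rw [Real.log_le_iff_le_exp (by norm_num)]
    have h4 : (2.7 : ℝ) ^ (2 : ℕ) ≤ Real.exp 1 ^ (2 : ℕ) :=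
      pow_le_pow_left₀ (by norm_num) hexp1' 2
    rw [Real.exp_one_pow] at h4
    have : ((2 : ℕ) : ℝ) = (2 : ℝ) := by norm_num
    have h5 : (2.7 : ℝ) ^ (2 : ℕ) = 7.29 := by norm_num
    linarith
  have hlogr : Real.log r ≤ S := by
    rw [hSdef]
    exact Real.log_le_log hr0 (by linarith)
  have hBS : B ≤ S - 1 := by
    rw [hBdef]; exact Real.log_le_sub_one_of_pos hSpos
  have hlogL : Real.log L ≤ L - 1 := Real.log_le_sub_one_of_pos hLpos
  have hlogt_ub : Real.log t ≤ 7 * (S + A) := by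
    have h1 : Real.log t ≤ Real.log (42 * r ^ 2 * L) := Real.log_le_log htpos htub
    have h2 : Real.log (42 * r ^ 2 * L) = Real.log 42 + 2 * Real.log r + Real.log L := by
      rw [Real.log_mul (by positivity) (ne_of_gt hLpos),
        Real.log_mul (by norm_num) (by positivity), Real.log_pow]
      push_cast; ring
    rw [h2] at h1
    linarith [hlog42, hlogr, hlogL, hBS, hS1, hA69, hB0]
  have hlogSA : Real.log (S + A) ≤ B + A := by
    have h1 : S + A ≤ S * (1 + A) := by nlinarith
    have h2 : Real.log (S + A) ≤ Real.log (S * (1 + A)) :=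
      Real.log_le_log (by linarith) h1
    rw [Real.log_mul (ne_of_gt hSpos) (by positivity)] at h2
    have h3 : Real.log (1 + A) ≤ A := by
      have := Real.log_le_sub_one_of_pos (show (0:ℝ) < 1 + A by linarith)
      linarith
    rw [← hBdef] at h2
    linarith
  have hloglogt : Real.log (Real.log t) + A ≤ 10 * L := by
    have h1 : Real.log (Real.log t) ≤ Real.log (7 * (S + A)) :=
      Real.log_le_log hlogt_pos hlogt_ub
    rw [Real.log_mul (by norm_num) (by positivity)] at h1
    rw [hLdef]
    linarith [hlog7, hlogSA, hA69, hB0]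
  -- the key inequality
  have hkey : (Real.log (Real.log t) + A) / t ≤ Δ ^ 2 / (4 * c ^ 2) := by
    rw [div_le_iff₀ htpos]
    have h2 : Δ ^ 2 / (4 * c ^ 2) = 1 / (4 * r ^ 2) := by
      rw [hr]; field_simp
    rw [h2, one_div, ← div_eq_inv_mul, le_div_iff₀ (show (0:ℝ) < 4 * r ^ 2 by positivity)]
    nlinarith [mul_le_mul_of_nonneg_right hloglogt
      (show (0:ℝ) ≤ 4 * r ^ 2 by positivity), htlb]
  have hmem : t ∈ {t : ℕ | 3 ≤ t ∧
      c * Real.sqrt ((Real.log (Real.log t) + Real.log (1 / α)) / t) ≤ Δ / 2} := by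
    refine ⟨ht3, ?_⟩
    have hsq : Real.sqrt ((Real.log (Real.log t) + A) / t) ≤ Δ / (2 * c) := by
      have h2 : (Real.log (Real.log t) + A) / t ≤ (Δ / (2 * c)) ^ 2 := by
        have : (Δ / (2 * c)) ^ 2 = Δ ^ 2 / (4 * c ^ 2) := by
          rw [div_pow]; congr 1; ring
        rw [this]; exact hkey
      calc Real.sqrt ((Real.log (Real.log t) + A) / t)
          ≤ Real.sqrt ((Δ / (2 * c)) ^ 2) := Real.sqrt_le_sqrt h2
        _ = Δ / (2 * c) := Real.sqrt_sq (by positivity)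
    rw [← hA]
    calc c * Real.sqrt ((Real.log (Real.log t) + A) / t)
        ≤ c * (Δ / (2 * c)) := by
          exact mul_le_mul_of_nonneg_left hsq (le_of_lt hc0)
      _ = Δ / 2 := by field_simp
  refine ⟨⟨t, hmem⟩, ?_⟩
  have hinf : sInf {t : ℕ | 3 ≤ t ∧
      c * Real.sqrt ((Real.log (Real.log t) + Real.log (1 / α)) / t) ≤ Δ / 2} ≤ t :=
    Nat.sInf_le hmem
  have hinfR : ((sInf {t : ℕ | 3 ≤ t ∧
      c * Real.sqrt ((Real.log (Real.log t) + Real.log (1 / α)) / t) ≤ Δ / 2} : ℕ) : ℝ)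
      ≤ (t : ℝ) := Nat.cast_le.mpr hinf
  have hfinal : (42 : ℝ) * r ^ 2 * L = 42 * c ^ 2 * (B + A) / Δ ^ 2 := by
    rw [hr, hLdef]; field_simp
  calc ((sInf {t : ℕ | 3 ≤ t ∧
      c * Real.sqrt ((Real.log (Real.log t) + Real.log (1 / α)) / t) ≤ Δ / 2} : ℕ) : ℝ)
      ≤ (t : ℝ) := hinfR
    _ ≤ 42 * r ^ 2 * L := htub
    _ = 42 * c ^ 2 * (Real.log (Real.log (3 + c / Δ)) + Real.log (1 / α)) / Δ ^ 2 := by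
        rw [hfinal, hBdef, hSdef, hA, hr]
end

section
/- For every real number Δ ∈ (0, 1/e], there exists a natural number t with 16 ≤ t ≤ (16/Δ²)·(2.35 + log log(1/Δ)) + 1 such that (log log t)/t ≤ Δ²/16, i.e., √((log log t)/t) ≤ Δ/4. -/
private lemma aux_log17 : Real.log 17 ≤ 3 := by
  rw [Real.log_le_iff_le_exp (by norm_num)]
  have he : (2.7 : ℝ) ≤ Real.exp 1 := by
    have := Real.exp_one_gt_d9; linarith
  have h1 : Real.exp (3:ℝ) = Real.exp 1 * Real.exp 1 * Real.exp 1 := by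
    rw [← Real.exp_add, ← Real.exp_add]; norm_num
  rw [h1]; nlinarith

private lemma aux_log335 : Real.log 3.35 ≤ 1.5 := by
  rw [Real.log_le_iff_le_exp (by norm_num)]
  have he : (2.7 : ℝ) ≤ Real.exp 1 := by
    have := Real.exp_one_gt_d9; linarith
  have h1 : Real.exp (1.5:ℝ) = Real.exp 1 * Real.exp 0.5 := by
    rw [← Real.exp_add]; norm_num
  have h2 : (1.5:ℝ) ≤ Real.exp 0.5 := by
    have := Real.add_one_le_exp (0.5:ℝ); linarith
  rw [h1]; nlinarith

private lemma aux_log75 : Real.log 7.5 ≤ 2.35 := by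
  rw [Real.log_le_iff_le_exp (by norm_num)]
  have he : (2.7 : ℝ) ≤ Real.exp 1 := by
    have := Real.exp_one_gt_d9; linarith
  have h1 : Real.exp (2.35:ℝ) = Real.exp 1 * Real.exp 1 * Real.exp 0.35 := by
    rw [← Real.exp_add, ← Real.exp_add]; norm_num
  have h2 : (1.35:ℝ) ≤ Real.exp 0.35 := by
    have := Real.add_one_le_exp (0.35:ℝ); linarith
  rw [h1]; nlinarith

set_option maxHeartbeats 800000 in
/-- Refined second step of the proof of Proposition D.1: for `Δ ∈ (0, 1/e]` there is a
natural number `t` with `16 ≤ t ≤ (16/Δ²)·(2.35 + log log(1/Δ)) + 1` such that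
`(log log t)/t ≤ Δ²/16`, i.e. `√((log log t)/t) ≤ Δ/4`. -/
theorem exists_crossing_time_refined (Δ : ℝ)
    (hΔ : Δ ∈ Set.Ioc (0 : ℝ) (1 / Real.exp 1)) :
    ∃ t : ℕ, 16 ≤ t ∧
      (t : ℝ) ≤ (16 / Δ ^ 2) * (2.35 + Real.log (Real.log (1 / Δ))) + 1 ∧
      Real.log (Real.log t) / t ≤ Δ ^ 2 / 16 ∧
      Real.sqrt (Real.log (Real.log t) / t) ≤ Δ / 4 := by
  obtain ⟨hΔ0, hΔe⟩ := hΔ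
  have he : (2.7 : ℝ) ≤ Real.exp 1 := by
    have := Real.exp_one_gt_d9; linarith
  obtain ⟨x, hxdef⟩ : ∃ x, Real.log (1 / Δ) = x := ⟨_, rfl⟩
  rw [hxdef]
  obtain ⟨L, hLdef⟩ : ∃ L, Real.log x = L := ⟨_, rfl⟩
  rw [hLdef]
  obtain ⟨A, hAdef⟩ : ∃ A, (16 / Δ ^ 2) * (2.35 + L) = A := ⟨_, rfl⟩
  rw [hAdef]
  have hΔinv : Real.exp 1 ≤ 1 / Δ := by
    have h1 : Δ * Real.exp 1 ≤ 1 := (le_div_iff₀ (Real.exp_pos 1)).mp hΔe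
    rw [le_div_iff₀ hΔ0]; nlinarith
  have hx1 : 1 ≤ x := by
    have := Real.log_le_log (Real.exp_pos 1) hΔinv
    rw [Real.log_exp, hxdef] at this
    exact this
  have hx0 : 0 < x := by linarith
  have hL0 : 0 ≤ L := hLdef ▸ Real.log_nonneg hx1
  have hLx : L ≤ x := by
    have := Real.log_le_sub_one_of_pos hx0; rw [hLdef] at this; linarith
  have hΔ1 : Δ ≤ 1 := by
    have h1 : (1:ℝ) ≤ Real.exp 1 := by linarith
    have : 1 / Real.exp 1 ≤ 1 := by
      rw [div_le_one (Real.exp_pos 1)]; linarith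
    linarith
  have hΔ2 : 0 < Δ ^ 2 := by positivity
  have hΔ2le : Δ ^ 2 ≤ 1 := by nlinarith
  have h16 : (16 : ℝ) ≤ 16 / Δ ^ 2 := by
    rw [le_div_iff₀ hΔ2]; nlinarith
  have hA : 37.6 ≤ A := by
    rw [← hAdef]
    nlinarith
  have hA0 : 0 ≤ A := by linarith
  have h16t : 16 ≤ ⌈A⌉₊ := by
    have h1 : (16 : ℝ) ≤ (⌈A⌉₊ : ℝ) := le_trans (by linarith) (Nat.le_ceil A)
    exact_mod_cast h1
  have htA : A ≤ (⌈A⌉₊ : ℝ) := Nat.le_ceil A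
  have ht1 : (⌈A⌉₊ : ℝ) ≤ A + 1 := le_of_lt (Nat.ceil_lt_add_one hA0)
  have htpos : (0:ℝ) < (⌈A⌉₊ : ℝ) := by linarith
  have hlogt_pos : 0 < Real.log (⌈A⌉₊ : ℝ) := Real.log_pos (by linarith)
  have hB : (⌈A⌉₊ : ℝ) ≤ 17 / Δ ^ 2 * (2.35 + L) := by
    have h1 : (1:ℝ) ≤ 1 / Δ ^ 2 * (2.35 + L) := by
      have h2 : (1:ℝ) ≤ 1 / Δ ^ 2 := by rw [le_div_iff₀ hΔ2]; nlinarith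
      nlinarith
    have h3 : A + 1 ≤ 17 / Δ ^ 2 * (2.35 + L) := by
      rw [← hAdef]
      have : 17 / Δ ^ 2 * (2.35 + L) = 16 / Δ ^ 2 * (2.35 + L) + 1 / Δ ^ 2 * (2.35 + L) := by
        ring
      rw [this]; linarith
    linarith
  have hlog17 := aux_log17
  have hlog335 := aux_log335
  have hlog75 := aux_log75
  have h235L : Real.log (2.35 + L) ≤ 1.5 + L := by
    have hle : (2.35 + L) ≤ 3.35 * x := by nlinarith
    have h1 : Real.log (2.35 + L) ≤ Real.log (3.35 * x) :=
      Real.log_le_log (by linarith) hle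
    have h2 : Real.log (3.35 * x) = Real.log 3.35 + L := by
      rw [Real.log_mul (by norm_num) (ne_of_gt hx0), hLdef]
    linarith
  have hxlogΔ : Real.log (1 / Δ ^ 2) = 2 * x := by
    rw [← hxdef, one_div, one_div, Real.log_inv, Real.log_inv, Real.log_pow]
    push_cast; ring
  have hlogB : Real.log (17 / Δ ^ 2 * (2.35 + L)) ≤ 4.5 + 3 * x := by
    have hpos1 : (0:ℝ) < 17 / Δ ^ 2 := by positivity
    have hpos2 : (0:ℝ) < 2.35 + L := by linarith
    rw [Real.log_mul (ne_of_gt hpos1) (ne_of_gt hpos2)]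
    have h4 : Real.log (17 / Δ ^ 2) = Real.log 17 + Real.log (1 / Δ ^ 2) := by
      rw [← Real.log_mul (by norm_num) (by positivity)]
      congr 1; field_simp
    rw [h4, hxlogΔ]
    linarith
  have hlogt : Real.log (⌈A⌉₊ : ℝ) ≤ 7.5 * x := by
    have h1 : Real.log (⌈A⌉₊ : ℝ) ≤ Real.log (17 / Δ ^ 2 * (2.35 + L)) :=
      Real.log_le_log htpos hB
    nlinarith
  have hkey : Real.log (Real.log (⌈A⌉₊ : ℝ)) ≤ 2.35 + L := by
    have h1 : Real.log (Real.log (⌈A⌉₊ : ℝ)) ≤ Real.log (7.5 * x) :=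
      Real.log_le_log hlogt_pos hlogt
    have h2 : Real.log (7.5 * x) = Real.log 7.5 + L := by
      rw [Real.log_mul (by norm_num) (ne_of_gt hx0), hLdef]
    linarith
  have hmain : Real.log (Real.log (⌈A⌉₊ : ℝ)) / (⌈A⌉₊ : ℝ) ≤ Δ ^ 2 / 16 := by
    rw [div_le_iff₀ htpos]
    have hAeq : A * (Δ ^ 2 / 16) = 2.35 + L := by
      rw [← hAdef]; field_simp
    have h5 : A * (Δ ^ 2 / 16) ≤ (⌈A⌉₊ : ℝ) * (Δ ^ 2 / 16) := by
      apply mul_le_mul_of_nonneg_right htA; positivity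
    calc Real.log (Real.log (⌈A⌉₊ : ℝ)) ≤ 2.35 + L := hkey
      _ = A * (Δ ^ 2 / 16) := hAeq.symm
      _ ≤ (⌈A⌉₊ : ℝ) * (Δ ^ 2 / 16) := h5
      _ = Δ ^ 2 / 16 * (⌈A⌉₊ : ℝ) := by ring
  have hsqrt : Real.sqrt (Real.log (Real.log (⌈A⌉₊ : ℝ)) / (⌈A⌉₊ : ℝ)) ≤ Δ / 4 := by
    have h1 : Real.sqrt (Real.log (Real.log (⌈A⌉₊ : ℝ)) / (⌈A⌉₊ : ℝ)) ≤
        Real.sqrt (Δ ^ 2 / 16) := Real.sqrt_le_sqrt hmain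
    have h2 : Real.sqrt (Δ ^ 2 / 16) = Δ / 4 := by
      rw [show Δ ^ 2 / 16 = (Δ / 4) ^ 2 by ring, Real.sqrt_sq (by positivity)]
    linarith
  exact ⟨⌈A⌉₊, h16t, ht1, hmain, hsqrt⟩
end

section
/- Define w(t, α) := 3.4 · √((log log(2t) + 0.72 · log(10.4/α)) / t) for integers t ≥ 1 and α ∈ (0,1). There exists an absolute constant K > 0 such that for every α ∈ (0, 1/2] and every Δ ∈ (0, 1], the quantity t₀ := min{t ∈ ℕ, t ≥ 1 : w(t, α) ≤ Δ/2} is finite and satisfies t₀ ≤ K · (log log(3 + 1/Δ) + log(1/α)) / Δ². -/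
set_option maxHeartbeats 2000000 in
/-- **Computational content of Corollary 5.1** (Gaussian mean change detection).
With the confidence-sequence width
`w t α := 3.4·√((log log(2t) + 0.72·log(10.4/α))/t)`, there is an absolute constant
`K > 0` such that for every `α ∈ (0, 1/2]` and `Δ ∈ (0, 1]` the first time `t₀ ≥ 1`
with `w t₀ α ≤ Δ/2` is finite and satisfies
`t₀ ≤ K·(log log(3 + 1/Δ) + log(1/α))/Δ²`. -/
theorem gaussian_mean_crossing_time_bound :
    ∃ K : ℝ, 0 < K ∧
      ∀ α Δ : ℝ, α ∈ Set.Ioc (0 : ℝ) (1 / 2) → Δ ∈ Set.Ioc (0 : ℝ) 1 →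
        {t : ℕ | 1 ≤ t ∧
          3.4 * Real.sqrt ((Real.log (Real.log (2 * t)) + 0.72 * Real.log (10.4 / α)) / t)
            ≤ Δ / 2}.Nonempty ∧
        ((sInf {t : ℕ | 1 ≤ t ∧
          3.4 * Real.sqrt ((Real.log (Real.log (2 * t)) + 0.72 * Real.log (10.4 / α)) / t)
            ≤ Δ / 2} : ℕ) : ℝ) ≤
          K * (Real.log (Real.log (3 + 1 / Δ)) + Real.log (1 / α)) / Δ ^ 2 := by
  refine ⟨1002, by norm_num, ?_⟩
  intro α Δ hα hΔ
  obtain ⟨hα0, hα2⟩ := hα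
  obtain ⟨hΔ0, hΔ1⟩ := hΔ
  set B : ℝ := Real.log (Real.log (3 + 1 / Δ)) + Real.log (1 / α) with hBdef
  clear_value B
  have hΔ2 : (0:ℝ) < Δ ^ 2 := by positivity
  have hΔinv : (0:ℝ) < 1 / Δ := by positivity
  have hαinv : (2:ℝ) ≤ 1 / α := by rw [le_div_iff₀ hα0]; linarith
  have hlogα : Real.log 2 ≤ Real.log (1 / α) :=
    Real.log_le_log (by norm_num) hαinv
  have hlog2l : (0.69:ℝ) ≤ Real.log 2 := by
    have := Real.log_two_gt_d9; linarith
  have hlog2u : Real.log 2 ≤ 0.694 := by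
    have := Real.log_two_lt_d9; linarith
  have hl3 : (1:ℝ) ≤ Real.log (3 + 1 / Δ) := by
    have he : Real.exp 1 ≤ 3 + 1 / Δ := by
      have := Real.exp_one_lt_d9; linarith
    calc (1:ℝ) = Real.log (Real.exp 1) := (Real.log_exp 1).symm
      _ ≤ Real.log (3 + 1 / Δ) := Real.log_le_log (Real.exp_pos 1) he
  have hl3pos : (0:ℝ) < Real.log (3 + 1 / Δ) := by linarith
  have hll3 : (0:ℝ) ≤ Real.log (Real.log (3 + 1 / Δ)) := Real.log_nonneg hl3
  have hB : (0.69:ℝ) ≤ B := by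
    have : (0.69:ℝ) ≤ Real.log (1 / α) := by linarith
    simp only [hBdef]; linarith
  have hBpos : (0:ℝ) < B := by linarith
  -- log(1/Δ) ≤ exp B
  have huB : Real.log (1 / Δ) ≤ Real.exp B := by
    have h1 : Real.log (1 / Δ) ≤ Real.log (3 + 1 / Δ) :=
      Real.log_le_log hΔinv (by linarith)
    have h2 : Real.log (3 + 1 / Δ) = Real.exp (Real.log (Real.log (3 + 1 / Δ))) :=
      (Real.exp_log hl3pos).symm
    have h3 : Real.exp (Real.log (Real.log (3 + 1 / Δ))) ≤ Real.exp B :=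
      Real.exp_le_exp.mpr (by simp only [hBdef]; linarith)
    linarith [h2 ▸ h1]
  have hexpB2 : (2:ℝ) ≤ Real.exp B := by
    calc (2:ℝ) = Real.exp (Real.log 2) := (Real.exp_log (by norm_num)).symm
      _ ≤ Real.exp B := Real.exp_le_exp.mpr (by linarith)
  have hBexp : B ≤ Real.exp B := by
    have := Real.add_one_le_exp B; linarith
  set t : ℕ := ⌈1000 * B / Δ ^ 2⌉₊ with htdef
  have htpos : 1 ≤ t := by
    rw [htdef]
    exact Nat.one_le_iff_ne_zero.mpr (Nat.ceil_pos.mpr (by positivity)).ne'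
  have htl : 1000 * B / Δ ^ 2 ≤ (t:ℝ) := Nat.le_ceil _
  have h1 : (t:ℝ) < 1000 * B / Δ ^ 2 + 1 := Nat.ceil_lt_add_one (by positivity)
  clear_value t
  have htR : (1:ℝ) ≤ (t:ℝ) := by exact_mod_cast htpos
  have hΔsq1 : Δ ^ 2 ≤ 1 := by nlinarith
  have htu : (t:ℝ) ≤ 1002 * B / Δ ^ 2 := by
    have h2 : (1:ℝ) ≤ 2 * B / Δ ^ 2 := by
      rw [le_div_iff₀ hΔ2]; nlinarith
    have h3 : 1000 * B / Δ ^ 2 + 2 * B / Δ ^ 2 = 1002 * B / Δ ^ 2 := by ring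
    linarith
  -- bound log log (2 t)
  have h2t : (2:ℝ) ≤ 2 * (t:ℝ) := by linarith
  have hlog2t : Real.log 2 ≤ Real.log (2 * (t:ℝ)) :=
    Real.log_le_log (by norm_num) h2t
  have hlog2tpos : (0:ℝ) < Real.log (2 * (t:ℝ)) := by linarith
  have hlog2004 : Real.log 2004 ≤ 7.64 := by
    have h1 : Real.log 2004 ≤ Real.log 2048 :=
      Real.log_le_log (by norm_num) (by norm_num)
    have h2 : Real.log 2048 = 11 * Real.log 2 := by
      rw [show (2048:ℝ) = 2 ^ 11 by norm_num, Real.log_pow]; push_cast; ring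
    rw [h2] at h1; linarith
  have hlogB : Real.log B ≤ B := by
    have := Real.log_le_sub_one_of_pos hBpos; linarith
  have hsplit : Real.log (2004 * B / Δ ^ 2)
      = Real.log 2004 + Real.log B + 2 * Real.log (1 / Δ) := by
    rw [Real.log_div (by positivity) (by positivity),
        Real.log_mul (by norm_num) hBpos.ne', Real.log_pow,
        one_div, Real.log_inv]
    push_cast; ring
  have hlog2t_ub : Real.log (2 * (t:ℝ)) ≤ 7 * Real.exp B := by
    have h1 : Real.log (2 * (t:ℝ)) ≤ Real.log (2004 * B / Δ ^ 2) := by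
      apply Real.log_le_log (by positivity)
      have : (2:ℝ) * (1002 * B / Δ ^ 2) = 2004 * B / Δ ^ 2 := by ring
      linarith
    rw [hsplit] at h1
    nlinarith [Real.exp_pos B]
  have hll2t : Real.log (Real.log (2 * (t:ℝ))) ≤ 2.09 + B := by
    have h1 : Real.log (Real.log (2 * (t:ℝ))) ≤ Real.log (7 * Real.exp B) :=
      Real.log_le_log hlog2tpos hlog2t_ub
    have h2 : Real.log (7 * Real.exp B) = Real.log 7 + B := by
      rw [Real.log_mul (by norm_num) (Real.exp_pos B).ne', Real.log_exp]
    have h3 : Real.log 7 ≤ 2.09 := by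
      have h4 : Real.log 7 ≤ Real.log 8 := Real.log_le_log (by norm_num) (by norm_num)
      have h5 : Real.log 8 = 3 * Real.log 2 := by
        rw [show (8:ℝ) = 2 ^ 3 by norm_num, Real.log_pow]; push_cast; ring
      rw [h5] at h4; linarith
    rw [h2] at h1; linarith
  -- bound the α term
  have hL : Real.log (10.4 / α) ≤ 2.78 + Real.log (1 / α) := by
    have h1 : Real.log (10.4 / α) = Real.log 10.4 - Real.log α := by
      rw [Real.log_div (by norm_num) hα0.ne']
    have h2 : Real.log (1 / α) = -Real.log α := by rw [one_div, Real.log_inv]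
    have h3 : Real.log 10.4 ≤ 2.78 := by
      have h4 : Real.log 10.4 ≤ Real.log 16 := Real.log_le_log (by norm_num) (by norm_num)
      have h5 : Real.log 16 = 4 * Real.log 2 := by
        rw [show (16:ℝ) = 2 ^ 4 by norm_num, Real.log_pow]; push_cast; ring
      rw [h5] at h4; linarith
    linarith
  have hlogαB : Real.log (1 / α) ≤ B := by simp only [hBdef]; linarith
  -- the numerator is at most 9 B
  have hN : Real.log (Real.log (2 * (t:ℝ))) + 0.72 * Real.log (10.4 / α) ≤ 9 * B := by
    nlinarith [hll2t, hL, hlogαB, hB]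
  -- membership of t in the set
  have htmem : t ∈ {t : ℕ | 1 ≤ t ∧
      3.4 * Real.sqrt ((Real.log (Real.log (2 * t)) + 0.72 * Real.log (10.4 / α)) / t)
        ≤ Δ / 2} := by
    refine ⟨htpos, ?_⟩
    have htpos' : (0:ℝ) < (t:ℝ) := by linarith
    have hNt : (Real.log (Real.log (2 * (t:ℝ))) + 0.72 * Real.log (10.4 / α)) / (t:ℝ)
        ≤ (Δ / 6.8) ^ 2 := by
      rw [div_le_iff₀ htpos']
      have h1 : (Δ / 6.8) ^ 2 * (1000 * B / Δ ^ 2) ≤ (Δ / 6.8) ^ 2 * (t:ℝ) :=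
        mul_le_mul_of_nonneg_left htl (by positivity)
      have h2 : (Δ / 6.8) ^ 2 * (1000 * B / Δ ^ 2) = (1000 / 46.24) * B := by
        field_simp; ring
      nlinarith
    calc 3.4 * Real.sqrt ((Real.log (Real.log (2 * (t:ℝ))) + 0.72 * Real.log (10.4 / α)) / (t:ℝ))
        ≤ 3.4 * Real.sqrt ((Δ / 6.8) ^ 2) := by
          gcongr
      _ = 3.4 * (Δ / 6.8) := by
          rw [Real.sqrt_sq (by positivity)]
      _ = Δ / 2 := by ring
  refine ⟨⟨t, htmem⟩, ?_⟩
  have hinf : sInf {t : ℕ | 1 ≤ t ∧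
      3.4 * Real.sqrt ((Real.log (Real.log (2 * t)) + 0.72 * Real.log (10.4 / α)) / t)
        ≤ Δ / 2} ≤ t := Nat.sInf_le htmem
  have hinfR : ((sInf {t : ℕ | 1 ≤ t ∧
      3.4 * Real.sqrt ((Real.log (Real.log (2 * t)) + 0.72 * Real.log (10.4 / α)) / t)
        ≤ Δ / 2} : ℕ) : ℝ) ≤ (t:ℝ) := by exact_mod_cast hinf
  calc ((sInf {t : ℕ | 1 ≤ t ∧
      3.4 * Real.sqrt ((Real.log (Real.log (2 * t)) + 0.72 * Real.log (10.4 / α)) / t)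
        ≤ Δ / 2} : ℕ) : ℝ) ≤ (t:ℝ) := hinfR
    _ ≤ 1002 * B / Δ ^ 2 := htu
end
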